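/- The polynomials C'(Γ_n, x) = Σ_p binomial(p+1, n-2p+1) x^p satisfy C'(Γ_n, x) = x·(C'(Γ_{n-2}, x) + C'(Γ_{n-3}, x)) for all n ≥ 3, with C'(Γ_0,x) = 1, C'(Γ_1,x) = x, C'(Γ_2,x) = 2x. -/

import Mathlib

/-- The hypercube graph `Q_n` on binary strings of length `n`:
two strings are adjacent iff they differ in exactly one coordinate. -/
def Qgraph (n : ℕ) : SimpleGraph (Fin n → Bool) where
  Adj x y := hammingDist x y = 1
  symm := ⟨fun x y h => (hammingDist_comm y x).trans h⟩
  loopless := ⟨fun x h => by simp only [hammingDist_self] at h; exact absurd h (by omega)⟩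

/-- The weight of a binary string: its number of `1`s. -/
def wt {n : ℕ} (x : Fin n → Bool) : ℕ :=
  (Finset.univ.filter fun i => x i = true).card

/-- Fibonacci strings of length `n`: no two (cyclically non-wrapping) consecutive 1's. -/
def fibSet (n : ℕ) : Set (Fin n → Bool) :=
  {s | ∀ i j : Fin n, (j : ℕ) = (i : ℕ) + 1 → ¬(s i = true ∧ s j = true)}

/-- Lucas strings of length `n`: Fibonacci strings whose first and last bits are not both 1. -/
def lucasSet (n : ℕ) : Set (Fin n → Bool) :=
  {s | s ∈ fibSet n ∧
    ∀ i j : Fin n, (i : ℕ) = 0 → (j : ℕ) = n - 1 → ¬(s i = true ∧ s j = true)}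

/-- The binary string `0^{l_0} 1 0^{l_1} 1 ⋯ 1 0^{l_p}` determined by a list
of lengths of blocks of `0`'s. -/
def blockString (l : List ℕ) : List Bool :=
  List.intercalate [true] (l.map fun k => List.replicate k false)

/-- The vertex of `Q_n` corresponding to the string `0^{l_0} 1 0^{l_1} 1 ⋯ 1 0^{l_p}`. -/
def ofBlocks (n : ℕ) (l : List ℕ) : Fin n → Bool :=
  fun i => (blockString l).getD (i : ℕ) false

/-- `V` induces a maximal hypercube of dimension `p` inside the subgraph of `Q_n`
induced by the vertex set `S`. -/
def IsMaxCube (n p : ℕ) (S : Set (Fin n → Bool)) (V : Set (Fin n → Bool)) : Prop :=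
  V ⊆ S ∧ Nonempty ((Qgraph n).induce V ≃g Qgraph p) ∧
    ¬ ∃ V' : Set (Fin n → Bool), V ⊂ V' ∧ V' ⊆ S ∧
      Nonempty ((Qgraph n).induce V' ≃g Qgraph (p + 1))

/-- Binomial coefficient `a` choose `b` with an integer lower argument,
equal to `0` when `b < 0`. -/
def chooseZ (a : ℕ) (b : ℤ) : ℕ := if 0 ≤ b then a.choose b.toNat else 0


open Polynomial in
/-- The counting polynomial of maximal hypercubes in the Fibonacci cube `Γ_n`:
the coefficient of `x^p` is `(p+1).choose (n - 2p + 1)`. -/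
noncomputable def fibCubePoly (n : ℕ) : Polynomial ℤ :=
  ∑ p ∈ Finset.range (n + 1), C ((chooseZ (p + 1) ((n : ℤ) - 2 * p + 1) : ℤ)) * X ^ p
open Polynomial in
lemma coeff_fibCubePoly (n p : ℕ) :
    (fibCubePoly n).coeff p = (chooseZ (p + 1) ((n : ℤ) - 2 * p + 1) : ℤ) := by
  unfold fibCubePoly
  rw [finset_sum_coeff]
  simp only [coeff_C_mul, coeff_X_pow, mul_ite, mul_one, mul_zero]
  by_cases h : p ≤ n
  · rw [Finset.sum_eq_single p]
    · simp
    · intro q _ hq; simp [Ne.symm hq]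
    · intro hp; exact absurd (Finset.mem_range.2 (by omega)) hp
  · have h0 : ¬ (0 : ℤ) ≤ (n : ℤ) - 2 * p + 1 := by omega
    rw [Finset.sum_eq_zero, chooseZ, if_neg h0]
    · simp
    · intro q hq
      have hne : p ≠ q := by simp at hq; omega
      simp [hne]

lemma chooseZ_pascal (p : ℕ) (b : ℤ) :
    chooseZ (p + 1) b = chooseZ p b + chooseZ p (b - 1) := by
  unfold chooseZ
  rcases lt_trichotomy b 0 with hb | hb | hb
  · rw [if_neg (by omega), if_neg (by omega), if_neg (by omega)]
  · subst hb; simp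
  · rw [if_pos (by omega), if_pos (by omega), if_pos (by omega)]
    have : b.toNat = (b - 1).toNat + 1 := by omega
    rw [this, Nat.choose_succ_succ, Nat.add_comm]

open Polynomial in
/-- The recurrence `C'(Γ_n, x) = x (C'(Γ_{n-2}, x) + C'(Γ_{n-3}, x))` for `n ≥ 3`,
with initial values `C'(Γ_0,x) = 1`, `C'(Γ_1,x) = x`, `C'(Γ_2,x) = 2x`. -/
theorem fibCubePoly_recurrence :
    (∀ n : ℕ, 3 ≤ n →
      fibCubePoly n = X * (fibCubePoly (n - 2) + fibCubePoly (n - 3))) ∧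
    fibCubePoly 0 = 1 ∧ fibCubePoly 1 = X ∧ fibCubePoly 2 = 2 * X := by
  refine ⟨fun n hn => ?_, ?_, ?_, ?_⟩
  · ext p
    match p with
    | 0 =>
      rw [coeff_fibCubePoly, mul_coeff_zero, coeff_X_zero, zero_mul]
      have h1 : (0:ℤ) ≤ (n : ℤ) - 0 + 1 := by omega
      have h2 : ((n : ℤ) - 2 * (0:ℕ) + 1).toNat = n + 1 := by push_cast; omega
      simp only [chooseZ, Nat.cast_ofNat]
      rw [if_pos (by push_cast; omega)]
      rw [h2, Nat.choose_eq_zero_of_lt (by omega)]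
      simp
    | p + 1 =>
      rw [coeff_X_mul, coeff_add, coeff_fibCubePoly, coeff_fibCubePoly, coeff_fibCubePoly]
      have e2 : ((n - 2 : ℕ) : ℤ) = (n : ℤ) - 2 := by omega
      have e3 : ((n - 3 : ℕ) : ℤ) = (n : ℤ) - 3 := by omega
      rw [e2, e3]
      have := chooseZ_pascal (p + 1) ((n : ℤ) - 2 * (p + 1 : ℕ) + 1)
      push_cast at this ⊢
      rw [this]
      ring_nf
      push_cast
      congr 2 <;> ring_nf
  · simp [fibCubePoly, chooseZ, Finset.sum_range_succ]
  · ext p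
    rw [coeff_fibCubePoly, coeff_X]
    rcases Nat.lt_or_ge p 2 with h | h
    · interval_cases p <;> simp [chooseZ] <;> rfl
    · rw [if_neg (by omega)]
      have : ¬ (0:ℤ) ≤ (1:ℤ) - 2 * p + 1 := by omega
      simp [chooseZ, this]
  · ext p
    rw [coeff_fibCubePoly]
    rcases Nat.lt_or_ge p 2 with h | h
    · interval_cases p <;> simp [chooseZ] <;> decide
    · have : ¬ (0:ℤ) ≤ (2:ℤ) - 2 * p + 1 := by omega
      simp [chooseZ, this, coeff_ofNat_mul, coeff_X]
      omega
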